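/- arXiv:2007.05752 — 2 statements merged into one kernel-verified Lean document; each statement's English description precedes it below -/
import Mathlib

section
/- For E ⊂ ℝ² the set defined as the union of balls B(q_j, 2^{−j}) over an enumeration {q_j} of the rational points of ℝ², the non-centered maximal function M𝟙_E is discontinuous at every point x ∈ ℝ² at which the upper approximate limit of 𝟙_E satisfies 𝟙_E^∨(x) = 0. Indeed, at any such x one has M𝟙_E(x) < 1 while there exist points x_j → x with M𝟙_E(x_j) = 1. -/
open MeasureTheory Metric Set Filter Topology
open scoped ENNReal NNReal
noncomputable section

/-- The non-centered maximal function of the characteristic function of `E`,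
written via volume ratios. -/
noncomputable def maxFnInd {d : ℕ} (E : Set (EuclideanSpace ℝ (Fin d)))
    (x : EuclideanSpace ℝ (Fin d)) : ℝ≥0∞ :=
  ⨆ (z : EuclideanSpace ℝ (Fin d)) (r : ℝ) (_ : 0 < r) (_ : x ∈ ball z r),
    volume (E ∩ ball z r) / volume (ball z r)

/-! Let `x` be a point where the density of `E` tends to zero. A ball `B(z, r) ∋ x` of bounded
radius contains a ball of radius comparable to `r` inside some `B(x, t)` in which `E` is sparse,
and a large ball is much bigger than `E`, which has finite measure. So every ball containing `x`
misses a fixed proportion of its measure, and `M𝟙_E(x) < 1`. On the other hand `E` is open and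
contains the dense set of rational points, and `M𝟙_E = 1` on an open set, so `x` is a limit of
points where `M𝟙_E = 1`. -/

open Module

section Geometry

variable {F : Type*} [SeminormedAddCommGroup F] [NormedSpace ℝ F]

theorem exists_ball_subset_ball_inter_ball {x z : F} {r t : ℝ} (hxz : x ∈ ball z r)
    (ht : 0 ≤ t) (htr : t ≤ r) : ∃ w, ball w (t / 2) ⊆ ball x t ∩ ball z r := by
  have hr : 0 < r := pos_of_mem_ball hxz
  have hd : dist x z < r := hxz
  have hc : t / (2 * r) ≤ 1 := by rw [div_le_one (by positivity)]; linarith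
  refine ⟨AffineMap.lineMap x z (t / (2 * r)), subset_inter (ball_subset_ball' ?_)
    (ball_subset_ball' ?_)⟩
  · rw [dist_lineMap_left, Real.norm_of_nonneg (by positivity)]
    calc t / 2 + t / (2 * r) * dist x z ≤ t / 2 + t / (2 * r) * r := by gcongr
      _ = t := by field_simp; ring
  · rw [dist_lineMap_right, Real.norm_of_nonneg (by linarith)]
    calc t / 2 + (1 - t / (2 * r)) * dist x z ≤ t / 2 + (1 - t / (2 * r)) * r := by gcongr
      _ = r := by field_simp; ring

end Geometry

section AddHaar

variable {F : Type*} [NormedAddCommGroup F] [NormedSpace ℝ F] [MeasurableSpace F] [BorelSpace F]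
  [FiniteDimensional ℝ F] (μ : Measure F) [μ.IsAddHaarMeasure]

theorem measure_ball_half (w x : F) (t : ℝ) :
    μ (ball w (t / 2)) = 2⁻¹ ^ finrank ℝ F * μ (ball x t) := by
  rw [div_eq_inv_mul, Measure.addHaar_ball_mul_of_pos μ w (by norm_num),
    Measure.addHaar_ball_center μ x, ENNReal.ofReal_pow (by norm_num),
    ENNReal.ofReal_inv_of_pos (by norm_num), ENNReal.ofReal_ofNat]

/-- `B(z, r)` contains a ball of radius `t / 2` inside `B(x, t)`, of measure
`2⁻¹ ^ n μ(B(x, t))`, at most half of which can lie in `E`. -/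
theorem le_measure_ball_diff_of_measure_inter_ball_le {E : Set F} {x z : F} {r t : ℝ}
    (hxz : x ∈ ball z r) (ht : 0 ≤ t) (htr : t ≤ r)
    (hdens : μ (E ∩ ball x t) ≤ 2⁻¹ ^ (finrank ℝ F + 1) * μ (ball x t)) :
    2⁻¹ ^ (finrank ℝ F + 1) * μ (ball x t) ≤ μ (ball z r \ E) := by
  obtain ⟨w, hw⟩ := exists_ball_subset_ball_inter_ball hxz ht htr
  have hhalves : 2⁻¹ ^ (finrank ℝ F + 1) * μ (ball x t)
      = 2⁻¹ ^ finrank ℝ F * μ (ball x t) - 2⁻¹ ^ (finrank ℝ F + 1) * μ (ball x t) := by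
    refine ENNReal.eq_sub_of_add_eq (by finiteness) ?_
    rw [← add_mul, pow_succ, ← div_eq_mul_inv, ENNReal.add_halves]
  calc 2⁻¹ ^ (finrank ℝ F + 1) * μ (ball x t)
      ≤ μ (ball w (t / 2)) - μ (E ∩ ball x t) := by
        rw [hhalves, measure_ball_half μ w x]; gcongr
    _ ≤ μ (ball w (t / 2) \ (E ∩ ball x t)) := le_measure_sdiff
    _ ≤ μ (ball z r \ E) :=
        measure_mono fun y hy => ⟨(hw hy.1).2, fun hyE => hy.2 ⟨hyE, (hw hy.1).1⟩⟩

theorem exists_le_measure_ball_diff_of_tendsto {E : Set F} {x : F}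
    (hx : Tendsto (fun r => μ (E ∩ ball x r) / μ (ball x r)) (𝓝[>] 0) (𝓝 0)) (R : ℝ) :
    ∃ ε ≠ 0, ∀ z r, x ∈ ball z r → r ≤ R → ε * μ (ball z r) ≤ μ (ball z r \ E) := by
  set δ : ℝ≥0∞ := 2⁻¹ ^ (finrank ℝ F + 1)
  have hδ : δ ≠ 0 := pow_ne_zero _ (ENNReal.inv_ne_zero.2 ENNReal.ofNat_ne_top)
  obtain ⟨ρ, hρ, hdens⟩ := mem_nhdsGT_iff_exists_Ioc_subset.mp
    (hx.eventually (gt_mem_nhds (pos_iff_ne_zero.2 hδ)))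
  have hρ : 0 < ρ := hρ
  set s := ρ / max ρ R
  have hs : 0 < s := by positivity
  refine ⟨δ * ENNReal.ofReal (s ^ finrank ℝ F),
    mul_ne_zero hδ (ENNReal.ofReal_pos.2 (pow_pos hs _)).ne', fun z r hxz hrR => ?_⟩
  have hr : 0 < r := pos_of_mem_ball hxz
  set t := min r ρ
  have ht : 0 < t := lt_min hr hρ
  have hst : s * r ≤ t := by
    refine le_min (mul_le_of_le_one_left hr.le
      (div_le_one_of_le₀ (le_max_left _ _) (le_max_of_le_left hρ.le))) ?_
    rw [div_mul_eq_mul_div, div_le_iff₀ (by positivity)]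
    exact mul_le_mul_of_nonneg_left (hrR.trans (le_max_right _ _)) hρ.le
  have hdens_t : μ (E ∩ ball x t) ≤ δ * μ (ball x t) :=
    ((ENNReal.div_lt_iff (Or.inl (measure_ball_pos μ x ht).ne')
      (Or.inl measure_ball_lt_top.ne)).1 (hdens ⟨ht, min_le_right r ρ⟩)).le
  calc δ * ENNReal.ofReal (s ^ finrank ℝ F) * μ (ball z r)
      = δ * μ (ball x (s * r)) := by
        rw [mul_assoc, Measure.addHaar_ball_mul_of_pos μ x hs, Measure.addHaar_ball_center μ z]
    _ ≤ δ * μ (ball x t) := by gcongr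
    _ ≤ μ (ball z r \ E) :=
        le_measure_ball_diff_of_measure_inter_ball_le μ hxz ht.le (min_le_left r ρ) hdens_t

theorem exists_le_measure_ball_diff_of_measure_ne_top [Nontrivial F] {E : Set F}
    (hE : μ E ≠ ∞) : ∃ R : ℝ, ∀ z r, R ≤ r → μ (ball z r) / 2 ≤ μ (ball z r \ E) := by
  have hballs : Tendsto (fun n : ℕ => μ (ball (0 : F) n)) atTop (𝓝 ∞) := by
    rw [← measure_univ_of_isAddLeftInvariant μ, ← iUnion_ball_nat (0 : F)]
    exact tendsto_measure_iUnion_atTop fun m n hmn => ball_subset_ball (by exact_mod_cast hmn)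
  obtain ⟨N, hN⟩ := (hballs.eventually (eventually_gt_nhds
    (ENNReal.mul_lt_top (ENNReal.ofNat_lt_top (n := 2)) hE.lt_top))).exists
  refine ⟨N, fun z r hr => ?_⟩
  have hEr : μ E ≤ μ (ball z r) / 2 := by
    rw [ENNReal.le_div_iff_mul_le (by simp) (by simp), mul_comm,
      Measure.addHaar_ball_center μ z]
    exact hN.le.trans (measure_mono (ball_subset_ball hr))
  calc μ (ball z r) / 2 = μ (ball z r) - μ (ball z r) / 2 :=
        (ENNReal.sub_half measure_ball_lt_top.ne).symm
    _ ≤ μ (ball z r) - μ E := by gcongr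
    _ ≤ μ (ball z r \ E) := le_measure_sdiff

theorem exists_forall_le_measure_ball_diff [Nontrivial F] {E : Set F} (hE : μ E ≠ ∞) {x : F}
    (hx : Tendsto (fun r => μ (E ∩ ball x r) / μ (ball x r)) (𝓝[>] 0) (𝓝 0)) :
    ∃ ε ≠ 0, ∀ z r, x ∈ ball z r → ε * μ (ball z r) ≤ μ (ball z r \ E) := by
  obtain ⟨R, hlarge⟩ := exists_le_measure_ball_diff_of_measure_ne_top μ hE
  obtain ⟨ε, hε, hsmall⟩ := exists_le_measure_ball_diff_of_tendsto μ hx R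
  refine ⟨min ε 2⁻¹, by simp [hε], fun z r hxz => ?_⟩
  rcases le_total r R with hr | hr
  · exact (mul_le_mul_left (min_le_left _ _) _).trans (hsmall z r hxz hr)
  · calc min ε 2⁻¹ * μ (ball z r) ≤ 2⁻¹ * μ (ball z r) := by gcongr; exact min_le_right _ _
      _ = μ (ball z r) / 2 := by rw [ENNReal.div_eq_inv_mul]
      _ ≤ μ (ball z r \ E) := hlarge z r hr

theorem measure_iUnion_ball_ne_top {ι : Type*} [Countable ι] (c : ι → F) {r : ι → ℝ}
    (hr : ∀ i, 0 < r i)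
    (hsum : Summable fun i => r i ^ finrank ℝ F) : μ (⋃ i, ball (c i) (r i)) ≠ ∞ := by
  refine ne_top_of_le_ne_top ?_ (measure_iUnion_le _)
  simp_rw [Measure.addHaar_ball_of_pos μ _ (hr _), ENNReal.tsum_mul_right,
    ← ENNReal.ofReal_tsum_of_nonneg (fun i => (pow_pos (hr i) _).le) hsum]
  finiteness

end AddHaar

theorem measure_inter_div_le_one_sub {α : Type*} [MeasurableSpace α] {μ : Measure α}
    {s t : Set α} {ε : ℝ≥0∞} (ht : NullMeasurableSet t μ) (hs : μ s ≠ ∞)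
    (h : ε * μ s ≤ μ (s \ t)) : μ (t ∩ s) / μ s ≤ 1 - ε := by
  refine ENNReal.div_le_of_le_mul ?_
  calc μ (t ∩ s) = μ s - μ (s \ t) := by
        rw [inter_comm]
        exact ENNReal.eq_sub_of_add_eq (measure_ne_top_of_subset sdiff_subset hs)
          (measure_inter_add_sdiff₀ s ht)
    _ ≤ μ s - ε * μ s := by gcongr
    _ = (1 - ε) * μ s := by rw [ENNReal.sub_mul fun _ _ => hs, one_mul]

theorem dense_setOf_forall_exists_rat_eq (ι : Type*) [Fintype ι] :
    Dense {x : EuclideanSpace ℝ ι | ∀ i, ∃ a : ℚ, x i = a} := by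
  have hrat : DenseRange (WithLp.toLp 2 ∘ Pi.map fun (_ : ι) (a : ℚ) => (a : ℝ)) :=
    (WithLp.toLp_surjective 2).denseRange.comp (DenseRange.piMap fun _ => Rat.denseRange_cast)
      (PiLp.continuous_toLp 2 _)
  refine hrat.mono ?_
  rintro _ ⟨a, rfl⟩ i
  exact ⟨a i, rfl⟩

section MaximalFunction

variable {d : ℕ} {E : Set (EuclideanSpace ℝ (Fin d))}

theorem maxFnInd_le_one (x : EuclideanSpace ℝ (Fin d)) : maxFnInd E x ≤ 1 :=
  iSup₂_le fun _ _ => iSup₂_le fun _ _ =>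
    (ENNReal.div_le_div_right (measure_mono inter_subset_right) _).trans ENNReal.div_self_le_one

theorem maxFnInd_eq_one_of_mem (hE : IsOpen E) {y : EuclideanSpace ℝ (Fin d)} (hy : y ∈ E) :
    maxFnInd E y = 1 := by
  obtain ⟨r, hr, hball⟩ := Metric.isOpen_iff.mp hE y hy
  refine (maxFnInd_le_one y).antisymm ?_
  calc (1 : ℝ≥0∞) = volume (E ∩ ball y r) / volume (ball y r) := by
        rw [inter_eq_self_of_subset_right hball,
          ENNReal.div_self (measure_ball_pos _ _ hr).ne' measure_ball_lt_top.ne]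
    _ ≤ maxFnInd E y := le_iSup₂_of_le y r <| le_iSup₂_of_le hr (mem_ball_self hr) le_rfl

theorem exists_seq_tendsto_maxFnInd_eq_one (hE : IsOpen E) (hdense : Dense E)
    (x : EuclideanSpace ℝ (Fin d)) :
    ∃ xs : ℕ → EuclideanSpace ℝ (Fin d), Tendsto xs atTop (𝓝 x) ∧ ∀ j, maxFnInd E (xs j) = 1 := by
  obtain ⟨xs, hxsE, hxs⟩ := mem_closure_iff_seq_limit.mp (hdense.closure_eq ▸ mem_univ x)
  exact ⟨xs, hxs, fun j => maxFnInd_eq_one_of_mem hE (hxsE j)⟩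

theorem maxFnInd_le_one_sub {x : EuclideanSpace ℝ (Fin d)} {ε : ℝ≥0∞}
    (hE : NullMeasurableSet E)
    (h : ∀ z r, x ∈ ball z r → ε * volume (ball z r) ≤ volume (ball z r \ E)) :
    maxFnInd E x ≤ 1 - ε :=
  iSup₂_le fun z r => iSup₂_le fun _ hxz =>
    measure_inter_div_le_one_sub hE measure_ball_lt_top.ne (h z r hxz)

theorem maxFnInd_lt_one_of_tendsto [NeZero d] (hE : NullMeasurableSet E) (hE_fin : volume E ≠ ∞)
    {x : EuclideanSpace ℝ (Fin d)}
    (hx : Tendsto (fun r => volume (E ∩ ball x r) / volume (ball x r)) (𝓝[>] 0) (𝓝 0)) :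
    maxFnInd E x < 1 := by
  obtain ⟨ε, hε, h⟩ := exists_forall_le_measure_ball_diff volume hE_fin hx
  exact (maxFnInd_le_one_sub hE h).trans_lt
    (ENNReal.sub_lt_self ENNReal.one_ne_top one_ne_zero hε)

end MaximalFunction

/-- for `E` the union of balls `B(q_j, 2^{-(j+1)})` over an enumeration of
the rational points of `ℝ²`, the maximal function `M𝟙_E` is discontinuous at every
point of vanishing upper density of `E`: there `M𝟙_E(x) < 1`, yet there are points
`x_j → x` with `M𝟙_E(x_j) = 1`. -/
theorem stmt8 (q : ℕ → EuclideanSpace ℝ (Fin 2))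
    (hq : Set.range q = {x : EuclideanSpace ℝ (Fin 2) | ∀ i, ∃ a : ℚ, x i = (a : ℝ)})
    (E : Set (EuclideanSpace ℝ (Fin 2)))
    (hE : E = ⋃ j : ℕ, ball (q j) ((2 : ℝ)⁻¹ ^ (j + 1)))
    (x : EuclideanSpace ℝ (Fin 2))
    (hx : Tendsto (fun r : ℝ => volume (E ∩ ball x r) / volume (ball x r))
      (𝓝[>] (0 : ℝ)) (𝓝 0)) :
    maxFnInd E x < 1 ∧
    ∃ xs : ℕ → EuclideanSpace ℝ (Fin 2),
      Tendsto xs atTop (𝓝 x) ∧ ∀ j, maxFnInd E (xs j) = 1 := by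
  have hE_open : IsOpen E := hE ▸ isOpen_iUnion fun j => isOpen_ball
  have hE_dense : Dense E := by
    refine (dense_setOf_forall_exists_rat_eq (Fin 2)).mono ?_
    rw [← hq, hE]
    rintro _ ⟨j, rfl⟩
    exact mem_iUnion_of_mem j (mem_ball_self (by positivity))
  have hsum : Summable fun j : ℕ =>
      ((2 : ℝ)⁻¹ ^ (j + 1)) ^ finrank ℝ (EuclideanSpace ℝ (Fin 2)) := by
    simp_rw [finrank_euclideanSpace_fin, ← pow_mul, pow_mul']
    exact (summable_nat_add_iff 1).mpr (summable_geometric_of_lt_one (by positivity) (by norm_num))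
  have hE_fin : volume E ≠ ∞ :=
    hE ▸ measure_iUnion_ball_ne_top volume q (fun j => by positivity) hsum
  exact ⟨maxFnInd_lt_one_of_tendsto hE_open.measurableSet.nullMeasurableSet hE_fin hx,
    exists_seq_tendsto_maxFnInd_eq_one hE_open hE_dense x⟩
end
end

section
/- Banach–Zarecki (one direction): let V ⊂ ℝ be open and v : V → ℝ a continuous function of locally bounded variation which satisfies the Lusin property (images of Lebesgue-null subsets of V are Lebesgue-null). Then v is locally absolutely continuous on V. -/
/-!
A function of bounded variation is differentiable almost everywhere, and its derivative is
integrable on compact intervals. On the set where `v` is differentiable, the area formula bounds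
the measure of `v '' s` by `∫_s |v'|`; on the remaining null set, property (N) makes the image
null. Since `v` is continuous, `v '' [s, t]` contains the interval between `v s` and `v t`, so
`|v t - v s| ≤ ∫_[s,t] |v'|`, and absolute continuity follows from that of the integral.
-/

open MeasureTheory Set
open scoped ENNReal

def AbsContOnIcc (v : ℝ → ℝ) (a b : ℝ) : Prop :=
  ∀ ε : ℝ, 0 < ε → ∃ δ : ℝ, 0 < δ ∧
    ∀ (n : ℕ) (s t : Fin n → ℝ),
      (∀ i, a ≤ s i ∧ s i ≤ t i ∧ t i ≤ b) →
      (∀ i j, i ≠ j → Disjoint (Set.Ioo (s i) (t i)) (Set.Ioo (s j) (t j))) →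
      (∑ i, (t i - s i)) < δ → (∑ i, |v (t i) - v (s i)|) < ε

theorem ofReal_abs_sub_le_volume_image_Icc {v : ℝ → ℝ} {s t : ℝ}
    (hv : ContinuousOn v (Icc s t)) (hst : s ≤ t) :
    ENNReal.ofReal |v t - v s| ≤ volume (v '' Icc s t) := by
  have hconn : IsPreconnected (v '' Icc s t) := isPreconnected_Icc.image v hv
  have hs : v s ∈ v '' Icc s t := mem_image_of_mem v (left_mem_Icc.2 hst)
  have ht : v t ∈ v '' Icc s t := mem_image_of_mem v (right_mem_Icc.2 hst)
  rcases le_total (v s) (v t) with h | h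
  · calc ENNReal.ofReal |v t - v s| = volume (Icc (v s) (v t)) := by
          rw [Real.volume_Icc, abs_of_nonneg (sub_nonneg.2 h)]
      _ ≤ _ := measure_mono (hconn.Icc_subset hs ht)
  · calc ENNReal.ofReal |v t - v s| = volume (Icc (v t) (v s)) := by
          rw [Real.volume_Icc, abs_sub_comm, abs_of_nonneg (sub_nonneg.2 h)]
      _ ≤ _ := measure_mono (hconn.Icc_subset ht hs)

theorem volume_image_le_lintegral_enorm_deriv {v : ℝ → ℝ} {s : Set ℝ} (hs : MeasurableSet s)
    (hv : ∀ x ∈ s, DifferentiableAt ℝ v x) :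
    volume (v '' s) ≤ ∫⁻ x in s, ‖deriv v x‖ₑ := by
  have h := addHaar_image_le_lintegral_abs_det_fderiv volume hs
    (f' := fun x => (1 : ℝ →L[ℝ] ℝ).smulRight (deriv v x))
    (fun x hx => (hv x hx).hasDerivAt.hasFDerivAt.hasFDerivWithinAt)
  simpa [ContinuousLinearMap.det_toSpanSingleton, Real.enorm_eq_ofReal_abs] using h

theorem volume_image_le_lintegral_enorm_deriv_of_ae {v : ℝ → ℝ} {s : Set ℝ}
    (hs : MeasurableSet s) (hv : ∀ᵐ x, x ∈ s → DifferentiableAt ℝ v x)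
    (hN : ∀ N ⊆ s, volume N = 0 → volume (v '' N) = 0) :
    volume (v '' s) ≤ ∫⁻ x in s, ‖deriv v x‖ₑ := by
  set D := {x | DifferentiableAt ℝ v x}
  have hD : MeasurableSet D := measurableSet_of_differentiableAt ℝ v
  have hsD : volume (s \ D) = 0 := by
    rw [measure_eq_zero_iff_ae_notMem]
    filter_upwards [hv] with x hx hxs using hxs.2 (hx hxs.1)
  calc volume (v '' s) = volume (v '' (s ∩ D) ∪ v '' (s \ D)) := by
        rw [← image_union, inter_union_sdiff]
    _ ≤ volume (v '' (s ∩ D)) + volume (v '' (s \ D)) := measure_union_le _ _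
    _ = volume (v '' (s ∩ D)) := by rw [hN _ sdiff_subset hsD, add_zero]
    _ ≤ ∫⁻ x in s ∩ D, ‖deriv v x‖ₑ :=
        volume_image_le_lintegral_enorm_deriv (hs.inter hD) fun _ hx => hx.2
    _ ≤ ∫⁻ x in s, ‖deriv v x‖ₑ := lintegral_mono_set inter_subset_left

theorem ofReal_abs_sub_le_lintegral_enorm_deriv {v : ℝ → ℝ} {s t : ℝ} (hst : s ≤ t)
    (hcont : ContinuousOn v (Icc s t)) (hbv : BoundedVariationOn v (Icc s t))
    (hN : ∀ N ⊆ Icc s t, volume N = 0 → volume (v '' N) = 0) :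
    ENNReal.ofReal |v t - v s| ≤ ∫⁻ x in Icc s t, ‖deriv v x‖ₑ := by
  rw [← uIcc_of_le hst] at hbv
  calc ENNReal.ofReal |v t - v s| ≤ volume (v '' Icc s t) :=
        ofReal_abs_sub_le_volume_image_Icc hcont hst
    _ ≤ ∫⁻ x in Icc s t, ‖deriv v x‖ₑ :=
        volume_image_le_lintegral_enorm_deriv_of_ae measurableSet_Icc
          (uIcc_of_le hst ▸ hbv.ae_differentiableAt_of_mem_uIcc) hN

theorem absContOnIcc_of_ofReal_abs_sub_le_lintegral {v : ℝ → ℝ} {a b : ℝ} {g : ℝ → ℝ≥0∞}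
    (hg : ∫⁻ x in Icc a b, g x ≠ ∞)
    (hv : ∀ s t, a ≤ s → s ≤ t → t ≤ b → ENNReal.ofReal |v t - v s| ≤ ∫⁻ x in Icc s t, g x) :
    AbsContOnIcc v a b := by
  intro ε hε
  obtain ⟨η, hη, hηε⟩ := exists_pos_setLIntegral_lt_of_measure_lt hg
    (ENNReal.ofReal_pos.2 hε).ne'
  obtain ⟨δ, -, hδ, hδη⟩ := ENNReal.lt_iff_exists_real_btwn.1 hη
  refine ⟨δ, ENNReal.ofReal_pos.1 hδ, fun n s t hst hdisj hsum => ?_⟩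
  set U := ⋃ i, Ioo (s i) (t i)
  have hUab : U ⊆ Icc a b := iUnion_subset fun i =>
    Ioo_subset_Icc_self.trans (Icc_subset_Icc (hst i).1 (hst i).2.2)
  have hU : volume.restrict (Icc a b) U < η := calc
    volume.restrict (Icc a b) U ≤ ∑ i, volume (Ioo (s i) (t i)) :=
      (Measure.restrict_le_self U).trans (measure_iUnion_fintype_le _ _)
    _ = ENNReal.ofReal (∑ i, (t i - s i)) := by
      rw [ENNReal.ofReal_sum_of_nonneg fun i _ => sub_nonneg.2 (hst i).2.1]
      simp only [Real.volume_Ioo]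
    _ < ENNReal.ofReal δ :=
      (ENNReal.ofReal_lt_ofReal_iff (ENNReal.ofReal_pos.1 hδ)).2 hsum
    _ ≤ η := hδη.le
  have hgU := hηε U hU
  rw [Measure.restrict_restrict (MeasurableSet.iUnion fun _ => measurableSet_Ioo),
    inter_eq_self_of_subset_left hUab] at hgU
  rw [← ENNReal.ofReal_lt_ofReal_iff hε,
    ENNReal.ofReal_sum_of_nonneg fun i _ => abs_nonneg _]
  calc ∑ i, ENNReal.ofReal |v (t i) - v (s i)|
      ≤ ∑ i, ∫⁻ x in Icc (s i) (t i), g x :=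
        Finset.sum_le_sum fun i _ => hv _ _ (hst i).1 (hst i).2.1 (hst i).2.2
    _ = ∑ i, ∫⁻ x in Ioo (s i) (t i), g x :=
        Finset.sum_congr rfl fun i _ => (setLIntegral_congr Ioo_ae_eq_Icc).symm
    _ = ∫⁻ x in U, g x := by
        rw [lintegral_iUnion (fun _ => measurableSet_Ioo) hdisj, tsum_fintype]
    _ < ENNReal.ofReal ε := hgU

theorem stmt9_general (V : Set ℝ) (v : ℝ → ℝ)
    (hcont : ContinuousOn v V)
    (hbv : LocallyBoundedVariationOn v V)
    (hLusin : ∀ N : Set ℝ, N ⊆ V → volume N = 0 → volume (v '' N) = 0) :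
    ∀ a b : ℝ, a ≤ b → Set.Icc a b ⊆ V → AbsContOnIcc v a b := by
  intro a b hab hsub
  have hbvI : BoundedVariationOn v (Icc a b) :=
    (hbv a b (hsub (left_mem_Icc.2 hab)) (hsub (right_mem_Icc.2 hab))).mono
      fun x hx => ⟨hsub hx, hx⟩
  have hderiv : IntegrableOn (deriv v) (Icc a b) :=
    (intervalIntegrable_iff_integrableOn_Icc_of_le hab).1
      (BoundedVariationOn.intervalIntegrable_deriv (uIcc_of_le hab ▸ hbvI))
  refine absContOnIcc_of_ofReal_abs_sub_le_lintegral hderiv.2.ne fun s t has hst htb => ?_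
  have hIcc : Icc s t ⊆ Icc a b := Icc_subset_Icc has htb
  exact ofReal_abs_sub_le_lintegral_enorm_deriv hst (hcont.mono (hIcc.trans hsub))
    (hbvI.mono hIcc) fun N hN => hLusin N (hN.trans (hIcc.trans hsub))

/-- Banach–Zarecki, one direction: a continuous function of locally
bounded variation on an open set `V ⊆ ℝ` satisfying the Lusin property (N) is
locally absolutely continuous: it is absolutely continuous on every compact
subinterval of `V`. -/
theorem stmt9 (V : Set ℝ) (hV : IsOpen V) (v : ℝ → ℝ)
    (hcont : ContinuousOn v V)
    (hbv : LocallyBoundedVariationOn v V)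
    (hLusin : ∀ N : Set ℝ, N ⊆ V → volume N = 0 → volume (v '' N) = 0) :
    ∀ a b : ℝ, a ≤ b → Set.Icc a b ⊆ V → AbsContOnIcc v a b :=
  stmt9_general V v hcont hbv hLusin
end
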